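/- Under the standing hypotheses, R is an α-partial Galois extension of R^α if and only if R is a finitely generated projective right R^α-module and the map j : R⋆_αG → End(R)_{R^α}, j(Σ_{g∈G} a_gδ_g)(x) = Σ_{g∈G} a_g·α_g(x·1_{g⁻¹}), is an isomorphism of rings and of left R-modules. -/

import Mathlib

universe u

/-- A groupoid in the algebraic sense of Lawson: a non-empty set `G` with a
partially defined binary operation (here modeled by a total operation `mul`
whose value is only constrained when it is defined, i.e. when `d g = r h`),
an inversion `inv`, and domain/range maps `d`, `r`. -/
structure AlgGroupoid (G : Type u) where
  mul : G → G → G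
  inv : G → G
  d : G → G
  r : G → G
  mul_assoc' : ∀ g h l, d g = r h → d h = r l → mul (mul g h) l = mul g (mul h l)
  mul_d : ∀ g, mul g (d g) = g
  r_mul : ∀ g, mul (r g) g = g
  inv_mul : ∀ g, mul (inv g) g = d g
  mul_inv : ∀ g, mul g (inv g) = r g
  d_mul : ∀ g h, d g = r h → d (mul g h) = d h
  r_mul' : ∀ g h, d g = r h → r (mul g h) = r g
  d_inv : ∀ g, d (inv g) = r g
  r_inv : ∀ g, r (inv g) = d g
  inv_inv : ∀ g, inv (inv g) = g
  d_d : ∀ g, d (d g) = d g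
  r_d : ∀ g, r (d g) = d g
  d_r : ∀ g, d (r g) = r g
  r_r : ∀ g, r (r g) = r g

/-- `e` is an identity element of the groupoid `𝔾`, i.e. an element of `G₀`. -/
def AlgGroupoid.isId {G : Type u} (𝔾 : AlgGroupoid G) (e : G) : Prop := 𝔾.d e = e

instance {G : Type u} [DecidableEq G] (𝔾 : AlgGroupoid G) (e : G) : Decidable (𝔾.isId e) :=
  inferInstanceAs (Decidable (𝔾.d e = e))

/-- `D` is a two-sided ideal of `E` (both being subsets of an ambient
non-unital ring `T`). -/
structure IsIdealIn {T : Type u} [NonUnitalRing T] (D E : Set T) : Prop where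
  subset : D ⊆ E
  zero_mem : (0 : T) ∈ D
  add_mem : ∀ ⦃x y : T⦄, x ∈ D → y ∈ D → x + y ∈ D
  neg_mem : ∀ ⦃x : T⦄, x ∈ D → -x ∈ D
  mul_mem_left : ∀ ⦃x y : T⦄, x ∈ E → y ∈ D → x * y ∈ D
  mul_mem_right : ∀ ⦃x y : T⦄, x ∈ D → y ∈ E → x * y ∈ D

/-- `u` is a (two-sided) multiplicative identity element of the subset `D`. -/
def IsIdentityElem {T : Type u} [NonUnitalRing T] (u : T) (D : Set T) : Prop :=
  u ∈ D ∧ ∀ x ∈ D, u * x = x ∧ x * u = x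

/-- A partial action `α = ({D_g}, {α_g})` of a groupoid `𝔾` on the ring whose
carrier is the subset `R` of the ambient non-unital ring `T` (take
`R = Set.univ` for a partial action on `T` itself).  For each `g`, `D (r g)`
is an ideal of `R`, `D g` is an ideal of `D (r g)` and `act g` restricts to a
ring isomorphism from `D (inv g)` onto `D g`; moreover `act e` is the identity
of `D e` for identities `e`, and for composable `g, h` the map `act (mul g h)`
extends `act g ∘ act h` (whose domain is `(act h)⁻¹ (D (inv g) ∩ D h)`). -/
structure PartialGroupoidAction {G : Type u} (𝔾 : AlgGroupoid G) (T : Type u)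
    [NonUnitalRing T] (R : Set T) where
  D : G → Set T
  act : G → T → T
  ideal_r : ∀ g, IsIdealIn (D (𝔾.r g)) R
  ideal : ∀ g, IsIdealIn (D g) (D (𝔾.r g))
  bijOn : ∀ g, Set.BijOn (act g) (D (𝔾.inv g)) (D g)
  map_add : ∀ g, ∀ x ∈ D (𝔾.inv g), ∀ y ∈ D (𝔾.inv g), act g (x + y) = act g x + act g y
  map_mul : ∀ g, ∀ x ∈ D (𝔾.inv g), ∀ y ∈ D (𝔾.inv g), act g (x * y) = act g x * act g y
  act_id : ∀ e, 𝔾.isId e → ∀ x ∈ D e, act e x = x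
  dom_cond : ∀ g h, 𝔾.d g = 𝔾.r h → ∀ x ∈ D (𝔾.inv h), act h x ∈ D (𝔾.inv g) →
    x ∈ D (𝔾.inv (𝔾.mul g h))
  comp_cond : ∀ g h, 𝔾.d g = 𝔾.r h → ∀ x ∈ D (𝔾.inv h), act h x ∈ D (𝔾.inv g) →
    act g (act h x) = act (𝔾.mul g h) x

/-- The partial action `α` is global if, for all composable `g, h`, the
composite `α_g ∘ α_h` (taken on its largest possible domain) coincides with
`α_{gh}`; since both maps always agree on the domain of the composite, this
amounts to the equality of the two domains. -/
def PartialGroupoidAction.IsGlobal {G : Type u} {𝔾 : AlgGroupoid G} {T : Type u}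
    [NonUnitalRing T] {R : Set T} (α : PartialGroupoidAction 𝔾 T R) : Prop :=
  ∀ g h, 𝔾.d g = 𝔾.r h →
    {x | x ∈ α.D (𝔾.inv h) ∧ α.act h x ∈ α.D (𝔾.inv g)} = α.D (𝔾.inv (𝔾.mul g h))

/-- The subring `R^α` of invariants of `R` under the partial action `α`,
where `one g` denotes the identity element `1_g` of the ideal `D_g`. -/
def invariants {G : Type u} (𝔾 : AlgGroupoid G) {R : Type u} [Ring R]
    (α : PartialGroupoidAction 𝔾 R (Set.univ : Set R)) (one : G → R) : Set R :=
  {x : R | ∀ g : G, α.act g (x * one (𝔾.inv g)) = x * one g}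

/-- The trace map `t_α : R → R`, `t_α(x) = ∑_{g ∈ G} α_g(x 1_{g⁻¹})`. -/
def traceMap {G : Type u} [Fintype G] (𝔾 : AlgGroupoid G) {R : Type u} [Ring R]
    (α : PartialGroupoidAction 𝔾 R (Set.univ : Set R)) (one : G → R) (x : R) : R :=
  ∑ g : G, α.act g (x * one (𝔾.inv g))

/-- `R` is an `α`-partial Galois extension of `R^α`: there is a partial Galois
coordinate system `x_i, y_i ∈ R` with
`∑_i x_i α_g(y_i 1_{g⁻¹}) = δ_{e,g} 1_e` for all `e ∈ G₀`, `g ∈ G`. -/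
def IsPartialGalois {G : Type u} [Fintype G] [DecidableEq G] (𝔾 : AlgGroupoid G)
    {R : Type u} [Ring R] (α : PartialGroupoidAction 𝔾 R (Set.univ : Set R))
    (one : G → R) : Prop :=
  ∃ (n : ℕ) (xs ys : Fin n → R), ∀ g : G,
    ∑ i, xs i * α.act g (ys i * one (𝔾.inv g)) = if 𝔾.isId g then one g else 0

/-!
Write `β_g x = α_g (x 1_{g⁻¹})`. As the `1_g` are central idempotents, each `β_g` is a
multiplicative additive map `R → D_g`, and the partial action axioms become
`β_h ∘ β_g = 1_h β_{hg}` for composable `h, g` (and `0` otherwise).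

Given a Galois coordinate system `(x_i, y_i)`, this yields
`∑_i β_h(x_i) β_g(y_i) = δ_{h,g} 1_g`. Hence the maps `tr(y_i ·)` (with values in `R^α`) form
a dual basis together with the `x_i`, so `R` is finitely generated projective; `j(c)`
recovers its coefficients as `c_g = ∑_i j(c)(x_i) β_g(y_i)`; and every `R^α`-linear `f` equals
`j(∑_i f(x_i) β_g(y_i))`.

Conversely, let `v_i, f_i` be a dual basis of `R` over `R^α` and write `f_i = j(c_i)`. As
`f_i` takes values in `R^α`, `j((1_h δ_h) c_i) = β_h ∘ j(c_i) = j(c_i) 1_h`, so injectivity of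
`j` gives `c_i(g) = β_g(c_i(d g))`; it also gives `∑_i v_i c_i = ∑_{e ∈ G₀} 1_e δ_e`, both
having image the identity. Hence `x_i = v_i`, `y_i = ∑_{e ∈ G₀} c_i(e)` is a Galois coordinate
system.
-/

open MulOpposite

theorem Module.finite_projective_iff_exists_dual_basis {A M : Type*} [Semiring A]
    [AddCommMonoid M] [Module A M] :
    (Module.Finite A M ∧ Module.Projective A M) ↔
      ∃ (n : ℕ) (v : Fin n → M) (φ : Fin n → M →ₗ[A] A), ∀ m, ∑ i, φ i m • v i = m := by
  constructor
  · rintro ⟨_, _⟩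
    obtain ⟨n, f, g, -, -, hfg⟩ := Module.Finite.exists_comp_eq_id_of_projective A M
    refine ⟨n, fun i => f (Pi.single i 1), fun i => LinearMap.proj i ∘ₗ g, fun m => ?_⟩
    calc ∑ i, g m i • f (Pi.single i 1) = f (g m) := by
          simp_rw [← map_smul, ← map_sum, ← Pi.single_smul', smul_eq_mul, mul_one,
            Finset.univ_sum_single]
      _ = m := LinearMap.congr_fun hfg m
  · rintro ⟨n, v, φ, hv⟩
    have hsplit : Fintype.linearCombination A v ∘ₗ LinearMap.pi φ = LinearMap.id :=
      LinearMap.ext fun m => by simpa [Fintype.linearCombination_apply] using hv m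
    exact ⟨.of_surjective (Fintype.linearCombination A v)
      fun m => ⟨_, LinearMap.congr_fun hsplit m⟩, .of_split _ _ hsplit⟩

theorem finite_projective_op_iff_exists_dual_basis {S R : Type*} [Ring S] [Ring R]
    (ι : S →+* R) (hι : Function.Injective ι) [Module Sᵐᵒᵖ R]
    (hsmul : ∀ (s : S) (x : R), op s • x = x * ι s) :
    (Module.Finite Sᵐᵒᵖ R ∧ Module.Projective Sᵐᵒᵖ R) ↔
      ∃ (n : ℕ) (v : Fin n → R) (f : Fin n → R →+ R),
        (∀ i x, ∀ r ∈ Set.range ι, f i (x * r) = f i x * r) ∧ (∀ i x, f i x ∈ Set.range ι) ∧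
          ∀ x, ∑ i, v i * f i x = x := by
  rw [Module.finite_projective_iff_exists_dual_basis]
  constructor
  · rintro ⟨n, v, φ, hv⟩
    refine ⟨n, v, fun i => AddMonoidHom.mk' (fun x => ι (φ i x).unop) (by simp),
      fun i x => ?_, fun i x => ⟨_, rfl⟩, fun x => ?_⟩
    · rintro _ ⟨s, rfl⟩
      simp [← hsmul]
    · conv_rhs => rw [← hv x]
      simp [← hsmul]
  · rintro ⟨n, v, f, hlin, hmem, hv⟩
    choose g hg using hmem
    let φ (i : Fin n) : R →ₗ[Sᵐᵒᵖ] Sᵐᵒᵖ :=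
      { toFun := fun x => op (g i x)
        map_add' := fun x y => by
          rw [← op_add]; congr 1; apply hι; simp [hg]
        map_smul' := fun s x => by
          rw [← op_unop s, hsmul, RingHom.id_apply, smul_eq_mul, ← op_mul]; congr 1
          apply hι; simp [hg, hlin i x _ ⟨s.unop, rfl⟩] }
    refine ⟨n, v, φ, fun x => ?_⟩
    conv_rhs => rw [← hv x]
    simp [φ, hsmul, hg]

namespace AlgGroupoid

variable {G : Type u} (𝔾 : AlgGroupoid G)

theorem isId_d (g : G) : 𝔾.isId (𝔾.d g) := 𝔾.d_d g

theorem r_eq_of_isId {e : G} (he : 𝔾.isId e) : 𝔾.r e = e := by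
  rw [← he, 𝔾.r_d]

theorem inv_eq_of_isId {e : G} (he : 𝔾.isId e) : 𝔾.inv e = e := by
  calc 𝔾.inv e = 𝔾.mul (𝔾.inv e) (𝔾.d (𝔾.inv e)) := (𝔾.mul_d _).symm
    _ = 𝔾.d e := by rw [𝔾.d_inv, r_eq_of_isId 𝔾 he, 𝔾.inv_mul]
    _ = e := he

theorem d_inv_eq_of_r_eq {h g : G} (hr : 𝔾.r h = 𝔾.r g) : 𝔾.d (𝔾.inv h) = 𝔾.r g := by
  rw [𝔾.d_inv, hr]

theorem r_inv_mul {h g : G} (hr : 𝔾.r h = 𝔾.r g) : 𝔾.r (𝔾.mul (𝔾.inv h) g) = 𝔾.d h := by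
  rw [𝔾.r_mul' _ _ (d_inv_eq_of_r_eq 𝔾 hr), 𝔾.r_inv]

theorem mul_inv_mul_cancel {h g : G} (hr : 𝔾.r h = 𝔾.r g) :
    𝔾.mul h (𝔾.mul (𝔾.inv h) g) = g := by
  rw [← 𝔾.mul_assoc' _ _ _ (𝔾.r_inv h).symm (d_inv_eq_of_r_eq 𝔾 hr), 𝔾.mul_inv, hr, 𝔾.r_mul]

theorem inv_mul_mul_cancel {h g : G} (hd : 𝔾.d h = 𝔾.r g) :
    𝔾.mul (𝔾.inv h) (𝔾.mul h g) = g := by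
  rw [← 𝔾.mul_assoc' _ _ _ (𝔾.d_inv h) hd, 𝔾.inv_mul, hd, 𝔾.r_mul]

theorem mul_mul_inv_cancel {h g : G} (hd : 𝔾.d h = 𝔾.r g) :
    𝔾.mul (𝔾.mul h g) (𝔾.inv g) = h := by
  rw [𝔾.mul_assoc' _ _ _ hd (𝔾.r_inv g).symm, 𝔾.mul_inv, ← hd, 𝔾.mul_d]

theorem inv_mul_eq {h g : G} (hd : 𝔾.d h = 𝔾.r g) :
    𝔾.inv (𝔾.mul h g) = 𝔾.mul (𝔾.inv g) (𝔾.inv h) := by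
  set k := 𝔾.mul h g
  have hdk : 𝔾.d k = 𝔾.d g := 𝔾.d_mul h g hd
  have hrk : 𝔾.r k = 𝔾.r h := 𝔾.r_mul' h g hd
  have hg_inv : 𝔾.mul g (𝔾.inv k) = 𝔾.inv h := by
    calc 𝔾.mul g (𝔾.inv k) = 𝔾.mul (𝔾.mul (𝔾.inv h) k) (𝔾.inv k) := by
          rw [inv_mul_mul_cancel 𝔾 hd]
      _ = 𝔾.mul (𝔾.inv h) (𝔾.r k) := by
          rw [𝔾.mul_assoc' _ _ _ (by rw [𝔾.d_inv, hrk]) (𝔾.r_inv k).symm, 𝔾.mul_inv]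
      _ = 𝔾.inv h := by rw [hrk, ← 𝔾.d_inv h, 𝔾.mul_d]
  calc 𝔾.inv k = 𝔾.mul (𝔾.mul (𝔾.inv g) g) (𝔾.inv k) := by
        rw [𝔾.inv_mul, ← hdk, ← 𝔾.r_inv, 𝔾.r_mul]
    _ = 𝔾.mul (𝔾.inv g) (𝔾.inv h) := by
        rw [𝔾.mul_assoc' _ _ _ (𝔾.d_inv g) (by rw [𝔾.r_inv, hdk]), hg_inv]

theorem not_isId_inv_mul {h g : G} (hr : 𝔾.r h = 𝔾.r g) (hne : h ≠ g) :
    ¬ 𝔾.isId (𝔾.mul (𝔾.inv h) g) := by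
  intro hid
  have hk : 𝔾.mul (𝔾.inv h) g = 𝔾.d h := by
    rw [← r_eq_of_isId 𝔾 hid, r_inv_mul 𝔾 hr]
  apply hne
  rw [← mul_inv_mul_cancel 𝔾 hr, hk, 𝔾.mul_d]

theorem sum_eq_sum_filter_inv_mul {M : Type*} [AddCommMonoid M] [Fintype G] [DecidableEq G]
    (h : G) (F : G → M) (hF : ∀ g, 𝔾.r g ≠ 𝔾.d h → F g = 0) :
    ∑ g, F g = ∑ k with 𝔾.r k = 𝔾.r h, F (𝔾.mul (𝔾.inv h) k) := by
  rw [← Finset.sum_filter_of_ne (p := fun g => 𝔾.r g = 𝔾.d h)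
    fun g _ hg => by_contra fun hne => hg (hF g hne)]
  refine Finset.sum_nbij' (𝔾.mul h) (𝔾.mul (𝔾.inv h)) ?_ ?_ ?_ ?_ ?_ <;>
    simp only [Finset.mem_filter, Finset.mem_univ, true_and]
  · exact fun g hg => 𝔾.r_mul' h g hg.symm
  · exact fun k hk => r_inv_mul 𝔾 hk.symm
  · exact fun g hg => inv_mul_mul_cancel 𝔾 hg.symm
  · exact fun k hk => mul_inv_mul_cancel 𝔾 hk.symm
  · exact fun g hg => by rw [inv_mul_mul_cancel 𝔾 hg.symm]

end AlgGroupoid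

namespace PartialGroupoidAction

variable {G R : Type u} [Ring R] {𝔾 : AlgGroupoid G} {α : PartialGroupoidAction 𝔾 R Set.univ}

theorem mem_D_r {g : G} {x : R} (hx : x ∈ α.D g) : x ∈ α.D (𝔾.r g) := (α.ideal g).subset hx

theorem sub_mem_D {g : G} {x y : R} (hx : x ∈ α.D g) (hy : y ∈ α.D g) : x - y ∈ α.D g :=
  sub_eq_add_neg x y ▸ (α.ideal g).add_mem hx ((α.ideal g).neg_mem hy)

theorem act_mem {g : G} {x : R} (hx : x ∈ α.D (𝔾.inv g)) : α.act g x ∈ α.D g :=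
  (α.bijOn g).mapsTo hx

theorem act_zero (g : G) : α.act g 0 = 0 := by
  have h0 := (α.ideal (𝔾.inv g)).zero_mem
  simpa using α.map_add g 0 h0 0 h0

theorem act_act_inv {g : G} {y : R} (hy : y ∈ α.D g) : α.act g (α.act (𝔾.inv g) y) = y := by
  have hy' : y ∈ α.D (𝔾.inv (𝔾.inv g)) := by rwa [𝔾.inv_inv]
  rw [α.comp_cond g _ (𝔾.r_inv g).symm y hy' (act_mem hy'), 𝔾.mul_inv,
    α.act_id _ (𝔾.d_r g) y (mem_D_r hy)]

theorem act_mem_D_mul {g h : G} (hgh : 𝔾.d g = 𝔾.r h) {x : R} (hxg : x ∈ α.D (𝔾.inv g))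
    (hxh : x ∈ α.D h) : α.act g x ∈ α.D (𝔾.mul g h) := by
  have hxh' : x ∈ α.D (𝔾.inv (𝔾.inv h)) := by rwa [𝔾.inv_inv]
  have hx : α.act h (α.act (𝔾.inv h) x) ∈ α.D (𝔾.inv g) := by rwa [act_act_inv hxh]
  have hcomp := α.comp_cond g h hgh _ (act_mem hxh') hx
  rw [act_act_inv hxh] at hcomp
  exact hcomp ▸ act_mem (α.dom_cond g h hgh _ (act_mem hxh') hx)

theorem mul_eq_zero_of_r_ne
    (horth : ∀ e f, 𝔾.isId e → 𝔾.isId f → e ≠ f → ∀ x ∈ α.D e, ∀ y ∈ α.D f, x * y = 0)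
    {g h : G} (hne : 𝔾.r g ≠ 𝔾.r h) {a b : R} (ha : a ∈ α.D g) (hb : b ∈ α.D h) :
    a * b = 0 :=
  horth _ _ (𝔾.d_r g) (𝔾.d_r h) hne a (mem_D_r ha) b (mem_D_r hb)

/-- `α_g(x 1_{g⁻¹})`: the partial isomorphism `α_g` extended by zero to all of `R`. -/
def extAct (α : PartialGroupoidAction 𝔾 R Set.univ) (one : G → R) (g : G) (x : R) : R :=
  α.act g (x * one (𝔾.inv g))

/-- The map `j` on the element `∑_g c_g δ_g` of the partial skew groupoid ring. -/
def jMap [Fintype G] (α : PartialGroupoidAction 𝔾 R Set.univ) (one : G → R) (c : G → R)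
    (x : R) : R :=
  ∑ g, c g * extAct α one g x

/-- The coefficients of `(1_h δ_h) (∑_g c_g δ_g)` in the partial skew groupoid ring, cut down
by `1_k` so that they lie in `D_k`; `extAct_jMap` is the multiplicativity of `j` on this
product. -/
def deltaMulCoeffs [DecidableEq G] (α : PartialGroupoidAction 𝔾 R Set.univ) (one : G → R)
    (h : G) (c : G → R) (k : G) : R :=
  if 𝔾.r k = 𝔾.r h then extAct α one h (c (𝔾.mul (𝔾.inv h) k)) * one k else 0

theorem sum_mem_D {ι : Type*} {g : G} (s : Finset ι) {f : ι → R} (hf : ∀ i ∈ s, f i ∈ α.D g) :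
    ∑ i ∈ s, f i ∈ α.D g :=
  Finset.sum_induction f (· ∈ α.D g) (fun _ _ ha hb => (α.ideal g).add_mem ha hb)
    (α.ideal g).zero_mem hf

theorem traceMap_eq_sum_extAct [Fintype G] (one : G → R) (x : R) :
    traceMap 𝔾 α one x = ∑ g, extAct α one g x := rfl

theorem jMap_mul_one [Fintype G] {one : G → R} (hcentral : ∀ g (x : R), one g * x = x * one g)
    (c : G → R) (h : G) (x : R) :
    jMap α one (fun k => c k * one h) x = jMap α one c x * one h := by
  simp only [jMap, Finset.sum_mul, mul_assoc, hcentral h]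

theorem extAct_zero (one : G → R) (g : G) : extAct α one g 0 = 0 := by
  rw [extAct, zero_mul, act_zero]

theorem jMap_sub [Fintype G] (one : G → R) (c c' : G → R) (x : R) :
    jMap α one (c - c') x = jMap α one c x - jMap α one c' x := by
  simp only [jMap, Pi.sub_apply, sub_mul, Finset.sum_sub_distrib]

theorem eq_of_jMap_eq [Fintype G] {one : G → R}
    (hinj : ∀ c : G → R, (∀ g, c g ∈ α.D g) → (∀ x, jMap α one c x = 0) → ∀ g, c g = 0)
    {c c' : G → R} (hc : ∀ g, c g ∈ α.D g) (hc' : ∀ g, c' g ∈ α.D g)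
    (hcc' : ∀ x, jMap α one c x = jMap α one c' x) : c = c' :=
  funext fun g => sub_eq_zero.mp <| hinj (c - c') (fun g => sub_mem_D (hc g) (hc' g))
    (fun x => by rw [jMap_sub, hcc', sub_self]) g

section Units

variable {one : G → R} (hone : ∀ g, IsIdentityElem (one g) (α.D g))
include hone

theorem one_mem (g : G) : one g ∈ α.D g := (hone g).1

theorem one_mul_of_mem {g : G} {x : R} (hx : x ∈ α.D g) : one g * x = x := ((hone g).2 x hx).1

theorem mul_one_of_mem {g : G} {x : R} (hx : x ∈ α.D g) : x * one g = x := ((hone g).2 x hx).2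

theorem mul_one_mem (x : R) (g : G) : x * one g ∈ α.D g := by
  have hr : x * one (𝔾.r g) ∈ α.D (𝔾.r g) := (α.ideal_r g).mul_mem_left trivial (one_mem hone _)
  rw [← one_mul_of_mem hone (mem_D_r (one_mem hone g)), ← mul_assoc]
  exact (α.ideal g).mul_mem_left hr (one_mem hone g)

theorem one_mul_one_self (g : G) : one g * one g = one g := mul_one_of_mem hone (one_mem hone g)

theorem extAct_mem (g : G) (x : R) : extAct α one g x ∈ α.D g := act_mem (mul_one_mem hone x _)

theorem extAct_mul_one (g : G) (x : R) : extAct α one g x * one g = extAct α one g x :=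
  mul_one_of_mem hone (extAct_mem hone g x)

theorem extAct_add (g : G) (x y : R) :
    extAct α one g (x + y) = extAct α one g x + extAct α one g y := by
  rw [extAct, add_mul, α.map_add g _ (mul_one_mem hone x _) _ (mul_one_mem hone y _)]; rfl

theorem extAct_sum {ι : Type*} (g : G) (s : Finset ι) (f : ι → R) :
    extAct α one g (∑ i ∈ s, f i) = ∑ i ∈ s, extAct α one g (f i) :=
  map_sum (AddMonoidHom.mk' (extAct α one g) (extAct_add hone g)) f s

theorem extAct_mul_one_inv (g : G) (x : R) :
    extAct α one g (x * one (𝔾.inv g)) = extAct α one g x := by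
  rw [extAct, mul_assoc, one_mul_one_self hone]; rfl

theorem mul_mem_D_left {g : G} {x : R} (hx : x ∈ α.D g) (y : R) : y * x ∈ α.D g := by
  rw [← mul_one_of_mem hone hx, ← mul_assoc]; exact mul_one_mem hone _ _

theorem extAct_of_isId {e : G} (he : 𝔾.isId e) (x : R) : extAct α one e x = x * one e := by
  rw [extAct, AlgGroupoid.inv_eq_of_isId 𝔾 he, α.act_id e he _ (mul_one_mem hone x e)]

theorem extAct_extAct_of_ne
    (horth : ∀ e f, 𝔾.isId e → 𝔾.isId f → e ≠ f → ∀ x ∈ α.D e, ∀ y ∈ α.D f, x * y = 0)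
    {h g : G} (hne : 𝔾.r g ≠ 𝔾.d h) (x : R) : extAct α one h (extAct α one g x) = 0 := by
  rw [extAct, mul_eq_zero_of_r_ne horth (by rwa [𝔾.r_inv]) (extAct_mem hone g x)
    (one_mem hone _), act_zero]

theorem deltaMulCoeffs_mem [DecidableEq G] (h : G) (c : G → R) (k : G) :
    deltaMulCoeffs α one h c k ∈ α.D k := by
  unfold deltaMulCoeffs
  split_ifs
  exacts [mul_one_mem hone _ _, (α.ideal k).zero_mem]

theorem traceMap_add [Fintype G] (x y : R) :
    traceMap 𝔾 α one (x + y) = traceMap 𝔾 α one x + traceMap 𝔾 α one y := by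
  simp only [traceMap_eq_sum_extAct, extAct_add hone, Finset.sum_add_distrib]

theorem jMap_ite_isId [Fintype G] [DecidableEq G]
    (hunit : (1 : R) = ∑ e ∈ Finset.univ.filter (fun e => 𝔾.isId e), one e) (x : R) :
    jMap α one (fun g => if 𝔾.isId g then one g else 0) x = x := by
  calc jMap α one (fun g => if 𝔾.isId g then one g else 0) x
      = ∑ e with 𝔾.isId e, x * one e := by
        rw [jMap, Finset.sum_filter]
        refine Finset.sum_congr rfl fun g _ => ?_
        split_ifs with hg
        · rw [extAct_of_isId hone hg, one_mul_of_mem hone (mul_one_mem hone x g)]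
        · exact zero_mul _
    _ = x := by rw [← Finset.mul_sum, ← hunit, mul_one]

variable (hcentral : ∀ g (x : R), one g * x = x * one g)
include hcentral

theorem mul_one_mul_mul_one (g : G) (x y : R) :
    x * one g * (y * one g) = x * y * one g := by
  rw [← mul_assoc, mul_assoc x, hcentral, ← mul_assoc, mul_assoc, one_mul_one_self hone]

theorem mul_mem_D_right {g : G} {x : R} (hx : x ∈ α.D g) (y : R) : x * y ∈ α.D g := by
  rw [← mul_one_of_mem hone hx, mul_assoc, hcentral, ← mul_assoc]; exact mul_one_mem hone _ _

theorem act_one_mul_one {g h : G} (hgh : 𝔾.d g = 𝔾.r h) :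
    α.act g (one (𝔾.inv g) * one h) = one g * one (𝔾.mul g h) := by
  -- `α_g` maps `D_{g⁻¹} ∩ D_h`, with identity `1_{g⁻¹} 1_h`, onto `D_g ∩ D_{gh}`, with identity
  -- `1_g 1_{gh}`, and a ring isomorphism preserves identities.
  set u := α.act g (one (𝔾.inv g) * one h)
  set v := one g * one (𝔾.mul g h)
  have ha : one (𝔾.inv g) * one h ∈ α.D (𝔾.inv g) := by
    rw [hcentral]; exact mul_one_mem hone _ _
  have hv : v ∈ α.D g := by rw [show v = _ from hcentral _ _]; exact mul_one_mem hone _ _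
  have hv' : v ∈ α.D (𝔾.inv (𝔾.inv g)) := by rwa [𝔾.inv_inv]
  have hw : α.act (𝔾.inv g) v ∈ α.D h := by
    have := act_mem_D_mul (α := α) (by rw [𝔾.d_inv, 𝔾.r_mul' g h hgh]) hv'
      (mul_one_mem hone _ _)
    rwa [AlgGroupoid.inv_mul_mul_cancel 𝔾 hgh] at this
  have huv : u * v = v := by
    conv_lhs => rw [← act_act_inv hv, ← α.map_mul g _ ha _ (act_mem hv'), mul_assoc,
      one_mul_of_mem hone hw, one_mul_of_mem hone (act_mem hv'), act_act_inv hv]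
  have hu : u ∈ α.D (𝔾.mul g h) := act_mem_D_mul hgh ha (mul_one_mem hone _ _)
  rw [← huv, ← mul_assoc, mul_one_of_mem hone (act_mem ha), mul_one_of_mem hone hu]

theorem extAct_mul (g : G) (x y : R) :
    extAct α one g (x * y) = extAct α one g x * extAct α one g y := by
  rw [extAct, ← mul_one_mul_mul_one hone hcentral,
    α.map_mul g _ (mul_one_mem hone x _) _ (mul_one_mem hone y _)]; rfl

theorem extAct_one_of_d_eq_r {g h : G} (hgh : 𝔾.d g = 𝔾.r h) :
    extAct α one g (one h) = one g * one (𝔾.mul g h) := by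
  rw [extAct, ← hcentral, act_one_mul_one hone hcentral hgh]

theorem extAct_mul_one_of_r_eq {g h : G} (hr : 𝔾.r g = 𝔾.r h) (x : R) :
    extAct α one g x * one h = extAct α one g (x * one (𝔾.mul (𝔾.inv g) h)) := by
  rw [extAct_mul hone hcentral,
    extAct_one_of_d_eq_r hone hcentral (AlgGroupoid.r_inv_mul 𝔾 hr).symm,
    AlgGroupoid.mul_inv_mul_cancel 𝔾 hr, ← mul_assoc, extAct_mul_one hone]

theorem extAct_extAct {h g : G} (hd : 𝔾.d h = 𝔾.r g) (x : R) :
    extAct α one h (extAct α one g x) = extAct α one (𝔾.mul h g) x * one h := by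
  set k := 𝔾.mul h g
  have hinv : 𝔾.mul (𝔾.inv g) (𝔾.inv h) = 𝔾.inv k := (AlgGroupoid.inv_mul_eq 𝔾 hd).symm
  -- Cutting `β_g x` down to `D_{h⁻¹}` puts it in the domain of the composition axiom.
  have hrestrict : extAct α one g x * one (𝔾.inv h) = extAct α one g (x * one (𝔾.inv k)) := by
    rw [extAct_mul_one_of_r_eq hone hcentral (by rw [𝔾.r_inv, hd]), hinv]
  have hz : x * one (𝔾.inv k) * one (𝔾.inv g) ∈ α.D (𝔾.inv g) := mul_one_mem hone _ _
  have hgz : α.act g (x * one (𝔾.inv k) * one (𝔾.inv g)) ∈ α.D (𝔾.inv h) := by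
    rw [show α.act g _ = _ from hrestrict.symm]; exact mul_one_mem hone _ _
  calc extAct α one h (extAct α one g x)
      = α.act k (x * one (𝔾.inv k) * one (𝔾.inv g)) := by
        rw [extAct, hrestrict, extAct, α.comp_cond h g hd _ hz hgz]
    _ = extAct α one k x * extAct α one k (one (𝔾.inv g)) := by
        rw [← extAct_mul hone hcentral, extAct, mul_assoc, mul_assoc, hcentral (𝔾.inv k)]
    _ = extAct α one k x * one h := by
        rw [extAct_one_of_d_eq_r hone hcentral (by rw [𝔾.r_inv, 𝔾.d_mul h g hd]),
          AlgGroupoid.mul_mul_inv_cancel 𝔾 hd, ← mul_assoc, extAct_mul_one hone]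

theorem extAct_mul_extAct {h g : G} (hr : 𝔾.r h = 𝔾.r g) (x y : R) :
    extAct α one h x * extAct α one g y =
      extAct α one h (x * extAct α one (𝔾.mul (𝔾.inv h) g) y) := by
  rw [extAct_mul hone hcentral, extAct_extAct hone hcentral (AlgGroupoid.r_inv_mul 𝔾 hr).symm,
    AlgGroupoid.mul_inv_mul_cancel 𝔾 hr, ← hcentral, ← mul_assoc, extAct_mul_one hone]

theorem extAct_mul_of_mem_invariants (g : G) (x : R) {r : R}
    (hr : r ∈ invariants 𝔾 α one) : extAct α one g (x * r) = extAct α one g x * r := by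
  rw [extAct_mul hone hcentral, show extAct α one g r = r * one g from hr g, ← hcentral,
    ← mul_assoc, extAct_mul_one hone]

theorem traceMap_mul_of_mem_invariants [Fintype G] (x : R) {r : R}
    (hr : r ∈ invariants 𝔾 α one) :
    traceMap 𝔾 α one (x * r) = traceMap 𝔾 α one x * r := by
  simp only [traceMap_eq_sum_extAct, extAct_mul_of_mem_invariants hone hcentral _ _ hr,
    Finset.sum_mul]

end Units

section Finite

variable [Fintype G] [DecidableEq G] {one : G → R} (hone : ∀ g, IsIdentityElem (one g) (α.D g))
  (hcentral : ∀ g (x : R), one g * x = x * one g)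
  (horth : ∀ e f, 𝔾.isId e → 𝔾.isId f → e ≠ f → ∀ x ∈ α.D e, ∀ y ∈ α.D f, x * y = 0)
include hone hcentral horth

theorem sum_mul_extAct_extAct (h : G) (a : G → R) (x : R) :
    ∑ g, a g * extAct α one h (extAct α one g x) =
      ∑ k with 𝔾.r k = 𝔾.r h, a (𝔾.mul (𝔾.inv h) k) * (extAct α one k x * one h) := by
  rw [AlgGroupoid.sum_eq_sum_filter_inv_mul 𝔾 h _
    fun g hg => by rw [extAct_extAct_of_ne hone horth hg, mul_zero]]
  refine Finset.sum_congr rfl fun k hk => ?_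
  have hk : 𝔾.r k = 𝔾.r h := (Finset.mem_filter.mp hk).2
  rw [extAct_extAct hone hcentral (AlgGroupoid.r_inv_mul 𝔾 hk.symm).symm,
    AlgGroupoid.mul_inv_mul_cancel 𝔾 hk.symm]

theorem extAct_jMap (h : G) (c : G → R) (x : R) :
    extAct α one h (jMap α one c x) = jMap α one (deltaMulCoeffs α one h c) x := by
  rw [jMap, extAct_sum hone]
  simp only [extAct_mul hone hcentral]
  rw [sum_mul_extAct_extAct hone hcentral horth, jMap]
  simp only [deltaMulCoeffs, ite_mul, zero_mul]
  rw [← Finset.sum_filter]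
  refine Finset.sum_congr rfl fun k _ => ?_
  rw [← hcentral, ← mul_assoc, extAct_mul_one hone, mul_assoc,
    one_mul_of_mem hone (extAct_mem hone k x)]

theorem traceMap_mem_invariants (x : R) : traceMap 𝔾 α one x ∈ invariants 𝔾 α one := by
  intro h
  calc extAct α one h (traceMap 𝔾 α one x)
      = ∑ k with 𝔾.r k = 𝔾.r h, extAct α one k x * one h := by
        simpa [traceMap_eq_sum_extAct, extAct_sum hone] using
          sum_mul_extAct_extAct hone hcentral horth h (fun _ => 1) x
    _ = traceMap 𝔾 α one x * one h := by
        rw [Finset.sum_filter_of_ne, traceMap_eq_sum_extAct, Finset.sum_mul]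
        exact fun k _ hk => by_contra fun hr =>
          hk (mul_eq_zero_of_r_ne horth hr (extAct_mem hone k x) (one_mem hone h))

theorem coeff_eq_extAct_of_jMap_mem_invariants
    (hinj : ∀ c : G → R, (∀ g, c g ∈ α.D g) → (∀ x, jMap α one c x = 0) → ∀ g, c g = 0)
    {c : G → R} (hc : ∀ g, c g ∈ α.D g) (hinv : ∀ x, jMap α one c x ∈ invariants 𝔾 α one)
    (h : G) : c h = extAct α one h (c (𝔾.d h)) := by
  have hdelta : deltaMulCoeffs α one h c = fun k => c k * one h :=
    eq_of_jMap_eq hinj (deltaMulCoeffs_mem hone h c)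
      (fun k => mul_mem_D_right hone hcentral (hc k) _) fun x => by
        rw [← extAct_jMap hone hcentral horth, jMap_mul_one hcentral]
        exact hinv x h
  have hh := congrFun hdelta h
  rw [deltaMulCoeffs, if_pos rfl, 𝔾.inv_mul, extAct_mul_one hone,
    mul_one_of_mem hone (hc h)] at hh
  exact hh.symm

end Finite

section GaloisCoordinates

variable [Fintype G] [DecidableEq G] {one : G → R} (hone : ∀ g, IsIdentityElem (one g) (α.D g))
  (hcentral : ∀ g (x : R), one g * x = x * one g) {n : ℕ} {xs ys : Fin n → R}
  (hG : ∀ g, ∑ i, xs i * extAct α one g (ys i) = if 𝔾.isId g then one g else 0)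
include hone hcentral hG

theorem sum_mul_traceMap (hunit : (1 : R) = ∑ e ∈ Finset.univ.filter (fun e => 𝔾.isId e), one e)
    (x : R) : ∑ i, xs i * traceMap 𝔾 α one (ys i * x) = x := by
  calc ∑ i, xs i * traceMap 𝔾 α one (ys i * x)
      = ∑ g, (∑ i, xs i * extAct α one g (ys i)) * extAct α one g x := by
        simp only [traceMap_eq_sum_extAct, extAct_mul hone hcentral, Finset.mul_sum,
          Finset.sum_mul, mul_assoc]
        exact Finset.sum_comm
    _ = x := by simp only [hG]; exact jMap_ite_isId hone hunit x

variable (horth : ∀ e f, 𝔾.isId e → 𝔾.isId f → e ≠ f → ∀ x ∈ α.D e, ∀ y ∈ α.D f, x * y = 0)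
include horth

omit [Fintype G] in
theorem sum_extAct_mul_extAct (h g : G) :
    ∑ i, extAct α one h (xs i) * extAct α one g (ys i) = if h = g then one g else 0 := by
  by_cases hr : 𝔾.r h = 𝔾.r g
  · simp only [extAct_mul_extAct hone hcentral hr, ← extAct_sum hone, hG]
    by_cases hhg : h = g
    · subst hhg
      rw [𝔾.inv_mul, if_pos (AlgGroupoid.isId_d 𝔾 h), if_pos rfl,
        extAct_one_of_d_eq_r hone hcentral (𝔾.r_d h).symm, 𝔾.mul_d, one_mul_one_self hone]
    · rw [if_neg (AlgGroupoid.not_isId_inv_mul 𝔾 hr hhg), if_neg hhg, extAct_zero]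
  · rw [if_neg fun hhg => hr (congrArg 𝔾.r hhg)]
    exact Finset.sum_eq_zero fun i _ =>
      mul_eq_zero_of_r_ne horth hr (extAct_mem hone h _) (extAct_mem hone g _)

theorem sum_jMap_mul_extAct (c : G → R) (g : G) :
    ∑ i, jMap α one c (xs i) * extAct α one g (ys i) = c g * one g := by
  simp only [jMap, Finset.sum_mul, mul_assoc]
  rw [Finset.sum_comm]
  simp only [← Finset.mul_sum, sum_extAct_mul_extAct hone hcentral hG horth, mul_ite, mul_zero,
    Finset.sum_ite_eq', Finset.mem_univ, if_true]

theorem jMap_injective_of_galois (c : G → R) (hc : ∀ g, c g ∈ α.D g)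
    (hc0 : ∀ x, jMap α one c x = 0) (g : G) : c g = 0 := by
  rw [← mul_one_of_mem hone (hc g), ← sum_jMap_mul_extAct hone hcentral hG horth]
  simp only [hc0, zero_mul, Finset.sum_const_zero]

theorem exists_jMap_eq_of_galois
    (hunit : (1 : R) = ∑ e ∈ Finset.univ.filter (fun e => 𝔾.isId e), one e)
    (f : R → R) (hadd : ∀ x y, f (x + y) = f x + f y)
    (hlin : ∀ x, ∀ r ∈ invariants 𝔾 α one, f (x * r) = f x * r) :
    ∃ c : G → R, (∀ g, c g ∈ α.D g) ∧ ∀ x, f x = jMap α one c x := by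
  refine ⟨fun g => ∑ i, f (xs i) * extAct α one g (ys i),
    fun g => sum_mem_D _ fun i _ => mul_mem_D_left hone (extAct_mem hone g _) _, fun x => ?_⟩
  calc f x = f (∑ i, xs i * traceMap 𝔾 α one (ys i * x)) := by
        rw [sum_mul_traceMap hone hcentral hG hunit]
    _ = ∑ i, f (xs i * traceMap 𝔾 α one (ys i * x)) := map_sum (AddMonoidHom.mk' f hadd) _ _
    _ = ∑ i, f (xs i) * traceMap 𝔾 α one (ys i * x) := by
        simp only [hlin _ _ (traceMap_mem_invariants hone hcentral horth _)]
    _ = jMap α one (fun g => ∑ i, f (xs i) * extAct α one g (ys i)) x := by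
        simp only [jMap, traceMap_eq_sum_extAct, extAct_mul hone hcentral, Finset.mul_sum,
          Finset.sum_mul, mul_assoc]
        exact Finset.sum_comm

theorem exists_dual_basis_of_galois
    (hunit : (1 : R) = ∑ e ∈ Finset.univ.filter (fun e => 𝔾.isId e), one e) :
    ∃ f : Fin n → R →+ R, (∀ i x, ∀ r ∈ invariants 𝔾 α one, f i (x * r) = f i x * r) ∧
      (∀ i x, f i x ∈ invariants 𝔾 α one) ∧ ∀ x, ∑ i, xs i * f i x = x :=
  ⟨fun i => AddMonoidHom.mk' (fun x => traceMap 𝔾 α one (ys i * x))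
      fun x y => by rw [mul_add, traceMap_add hone],
    fun i x r hr => by
      simp only [AddMonoidHom.mk'_apply, ← mul_assoc,
        traceMap_mul_of_mem_invariants hone hcentral _ hr],
    fun i x => traceMap_mem_invariants hone hcentral horth _,
    sum_mul_traceMap hone hcentral hG hunit⟩

end GaloisCoordinates

theorem isPartialGalois_of_dual_basis [Fintype G] [DecidableEq G] {one : G → R}
    (hone : ∀ g, IsIdentityElem (one g) (α.D g)) (hcentral : ∀ g (x : R), one g * x = x * one g)
    (horth : ∀ e f, 𝔾.isId e → 𝔾.isId f → e ≠ f → ∀ x ∈ α.D e, ∀ y ∈ α.D f, x * y = 0)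
    (hunit : (1 : R) = ∑ e ∈ Finset.univ.filter (fun e => 𝔾.isId e), one e)
    (hinj : ∀ c : G → R, (∀ g, c g ∈ α.D g) → (∀ x, jMap α one c x = 0) → ∀ g, c g = 0)
    (hsurj : ∀ f : R → R, (∀ x y, f (x + y) = f x + f y) →
      (∀ x, ∀ r ∈ invariants 𝔾 α one, f (x * r) = f x * r) →
      ∃ c : G → R, (∀ g, c g ∈ α.D g) ∧ ∀ x, f x = jMap α one c x)
    {n : ℕ} (v : Fin n → R) (f : Fin n → R →+ R)
    (hlin : ∀ i x, ∀ r ∈ invariants 𝔾 α one, f i (x * r) = f i x * r)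
    (hmem : ∀ i x, f i x ∈ invariants 𝔾 α one) (hv : ∀ x, ∑ i, v i * f i x = x) :
    IsPartialGalois 𝔾 α one := by
  choose c hc hcf using fun i => hsurj (f i) (f i).map_add (hlin i)
  have hc_eq (i : Fin n) (g : G) : c i g = extAct α one g (c i (𝔾.d g)) :=
    coeff_eq_extAct_of_jMap_mem_invariants hone hcentral horth hinj (hc i)
      (fun x => hcf i x ▸ hmem i x) g
  have hvc : (fun g => ∑ i, v i * c i g) = fun g => if 𝔾.isId g then one g else 0 := by
    refine eq_of_jMap_eq hinj (fun g => sum_mem_D _ fun i _ => mul_mem_D_left hone (hc i g) _)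
      (fun g => by split_ifs; exacts [one_mem hone g, (α.ideal g).zero_mem]) fun x => ?_
    rw [jMap_ite_isId hone hunit]
    conv_rhs => rw [← hv x]
    simp only [hcf, jMap, Finset.sum_mul, Finset.mul_sum, mul_assoc]
    exact Finset.sum_comm
  refine ⟨n, v, fun i => ∑ e with 𝔾.isId e, c i e, fun g => ?_⟩
  have hy (i : Fin n) : extAct α one g (∑ e with 𝔾.isId e, c i e) = c i g := by
    rw [← extAct_mul_one_inv hone, Finset.sum_mul, Finset.sum_eq_single_of_mem (𝔾.d g)
      (Finset.mem_filter.mpr ⟨Finset.mem_univ _, AlgGroupoid.isId_d 𝔾 g⟩),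
      extAct_mul_one_inv hone, ← hc_eq]
    intro e he hne
    refine mul_eq_zero_of_r_ne horth ?_ (hc i e) (one_mem hone _)
    rwa [AlgGroupoid.r_eq_of_isId 𝔾 (Finset.mem_filter.mp he).2, 𝔾.r_inv]
  exact (Finset.sum_congr rfl fun i _ => congrArg (v i * ·) (hy i)).trans (congrFun hvc g)

end PartialGroupoidAction

/-- `R^α` enters through a ring `S` and an injective ring map `ι : S → R` with image `R^α`;
bijectivity of `j` is expressed through coefficient families `c` with `c g ∈ D_g`, and its
target consists of the additive right `R^α`-linear endomorphisms of `R`. -/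
theorem partial_galois_iff_projective_and_j_iso_general {G : Type u} [Fintype G]
    [DecidableEq G] (𝔾 : AlgGroupoid G) {R : Type u} [Ring R]
    (α : PartialGroupoidAction 𝔾 R (Set.univ : Set R))
    (one : G → R) (hone : ∀ g, IsIdentityElem (one g) (α.D g))
    (hcentral : ∀ g (x : R), one g * x = x * one g)
    (horth : ∀ e f, 𝔾.isId e → 𝔾.isId f → e ≠ f → ∀ x ∈ α.D e, ∀ y ∈ α.D f, x * y = 0)
    (hunit : (1 : R) = ∑ e ∈ Finset.univ.filter (fun e => 𝔾.isId e), one e)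
    (S : Type u) [Ring S] (ι : S →+* R) (hι : Function.Injective ι)
    (hrange : Set.range ι = invariants 𝔾 α one)
    [Module Sᵐᵒᵖ R]
    (hsmul : ∀ (s : S) (x : R), (MulOpposite.op s) • x = x * ι s) :
    IsPartialGalois 𝔾 α one ↔
      (Module.Finite Sᵐᵒᵖ R ∧ Module.Projective Sᵐᵒᵖ R ∧
        (∀ c : G → R, (∀ g, c g ∈ α.D g) →
          (∀ x : R, ∑ g : G, c g * α.act g (x * one (𝔾.inv g)) = 0) → ∀ g, c g = 0) ∧
        (∀ f : R → R, (∀ x y : R, f (x + y) = f x + f y) →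
          (∀ x : R, ∀ r ∈ invariants 𝔾 α one, f (x * r) = f x * r) →
          ∃ c : G → R, (∀ g, c g ∈ α.D g) ∧
            ∀ x : R, f x = ∑ g : G, c g * α.act g (x * one (𝔾.inv g)))) := by
  open PartialGroupoidAction in
  rw [← and_assoc, finite_projective_op_iff_exists_dual_basis ι hι hsmul, hrange]
  constructor
  · rintro ⟨n, xs, ys, hG⟩
    exact ⟨⟨n, xs, exists_dual_basis_of_galois hone hcentral hG horth hunit⟩,
      jMap_injective_of_galois hone hcentral hG horth,
      exists_jMap_eq_of_galois hone hcentral hG horth hunit⟩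
  · rintro ⟨⟨n, v, f, hlin, hmem, hv⟩, hinj, hsurj⟩
    exact isPartialGalois_of_dual_basis hone hcentral horth hunit hinj hsurj v f hlin hmem hv

/-- **Theorem 5.3 (i) ⇔ (ii)**: under the standing hypotheses, `R` is an
`α`-partial Galois extension of `R^α` if and only if `R` is a finitely
generated projective right `R^α`-module and the map
`j : R⋆_αG → End(R)_{R^α}`, `j(∑ a_g δ_g)(x) = ∑ a_g α_g(x 1_{g⁻¹})`, is an
isomorphism of rings and of left `R`-modules (here `S` is a ring isomorphic,
via `ι`, to `R^α`, bijectivity of `j` is expressed through coefficients, and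
surjectivity targets the additive right-`R^α`-linear endomorphisms of `R`). -/
theorem partial_galois_iff_projective_and_j_iso {G : Type u} [Nonempty G] [Fintype G]
    [DecidableEq G] (𝔾 : AlgGroupoid G) {R : Type u} [Ring R]
    (α : PartialGroupoidAction 𝔾 R (Set.univ : Set R))
    (one : G → R) (hone : ∀ g, IsIdentityElem (one g) (α.D g))
    (hcentral : ∀ g (x : R), one g * x = x * one g)
    (horth : ∀ e f, 𝔾.isId e → 𝔾.isId f → e ≠ f → ∀ x ∈ α.D e, ∀ y ∈ α.D f, x * y = 0)
    (hunit : (1 : R) = ∑ e ∈ Finset.univ.filter (fun e => 𝔾.isId e), one e)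
    (S : Type u) [Ring S] (ι : S →+* R) (hι : Function.Injective ι)
    (hrange : Set.range ι = invariants 𝔾 α one)
    [Module Sᵐᵒᵖ R]
    (hsmul : ∀ (s : S) (x : R), (MulOpposite.op s) • x = x * ι s) :
    IsPartialGalois 𝔾 α one ↔
      (Module.Finite Sᵐᵒᵖ R ∧ Module.Projective Sᵐᵒᵖ R ∧
        (∀ c : G → R, (∀ g, c g ∈ α.D g) →
          (∀ x : R, ∑ g : G, c g * α.act g (x * one (𝔾.inv g)) = 0) → ∀ g, c g = 0) ∧
        (∀ f : R → R, (∀ x y : R, f (x + y) = f x + f y) →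
          (∀ x : R, ∀ r ∈ invariants 𝔾 α one, f (x * r) = f x * r) →
          ∃ c : G → R, (∀ g, c g ∈ α.D g) ∧
            ∀ x : R, f x = ∑ g : G, c g * α.act g (x * one (𝔾.inv g)))) :=
  partial_galois_iff_projective_and_j_iso_general 𝔾 α one hone hcentral horth hunit S ι hι hrange
    hsmul
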